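/- Let (𝒰₁,𝒱₁),(𝒰₂,𝒱₂) be a twin cotorsion pair on an exact category 𝓑 with enough projectives and injectives (i.e., 𝒰₁ ⊆ 𝒰₂), 𝒲_t = 𝒱₁ ∩ 𝒰₂, and 𝓗_t the heart of the twin cotorsion pair. For a morphism f : A → B with A, B ∈ 𝓗_t, the image H₂(f) is zero in 𝓗₂/𝒲₂ if and only if f factors through an object of 𝒲_t. Consequently the induced functor β₂ : 𝓗_t/𝒲_t → 𝓗₂/𝒲₂ is faithful. -/

import Mathlib

/-!
Write `B ∈ 𝓑_t⁺` as a quotient `p : W ↠ B` of an object of `𝒲_t` by an object of `𝒱₂`. A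
coresolution of `W` for `(𝒰₂, 𝒱₂)` produces an inflation `j : B ↣ Y` with `Y ∈ 𝓑₂⁺` such that,
by `Ext¹(𝒰₂, 𝒱₂) = 0`, a morphism `h` into `B` factors through `p` as soon as `h ≫ j` factors
through `𝒲₂`. Since `𝒰₁ ⊆ 𝒰₂`, every `A ∈ 𝓑_t⁻` lies in `𝓑₂⁻`, and for such `A` the two
adjunctions defining `H₂` show that `H₂ f = H₂ g` forces `f ≫ j ≡ g ≫ j` modulo `𝒲₂`. Hence
`H₂ f = H₂ g` implies that `f - g` factors through `𝒲_t`, which gives both claims.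
-/

open CategoryTheory Limits ZeroObject

universe v u

variable (C : Type u) [Category.{v} C] [Preadditive C] [HasZeroObject C]
  [HasBinaryBiproducts C]

/-- An exact structure (in the sense of Quillen) on an additive category,
given by a class of short exact sequences (conflations). -/
structure ExactStructure : Type (max u (v + 1)) where
  /-- the class of short exact sequences -/
  IsSES : ∀ {A B X : C}, (A ⟶ B) → (B ⟶ X) → Prop
  comp_zero : ∀ {A B X : C} {f : A ⟶ B} {g : B ⟶ X}, IsSES f g → f ≫ g = 0
  isKernel : ∀ {A B X : C} {f : A ⟶ B} {g : B ⟶ X} (h : IsSES f g),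
      Nonempty (IsLimit (KernelFork.ofι f (comp_zero h)))
  isCokernel : ∀ {A B X : C} {f : A ⟶ B} {g : B ⟶ X} (h : IsSES f g),
      Nonempty (IsColimit (CokernelCofork.ofπ g (comp_zero h)))
  ses_iso_congr : ∀ {A B X A' B' X' : C} {f : A ⟶ B} {g : B ⟶ X}
      (eA : A' ≅ A) (eB : B ≅ B') (eX : X ≅ X'), IsSES f g →
      IsSES (eA.hom ≫ f ≫ eB.hom) (eB.inv ≫ g ≫ eX.hom)
  id_ses : ∀ A : C, IsSES (𝟙 A) (0 : A ⟶ 0)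
  id_ses' : ∀ A : C, IsSES (0 : (0 : C) ⟶ A) (𝟙 A)
  infl_comp : ∀ {A B X : C} (f : A ⟶ B) (f' : B ⟶ X),
      (∃ (Z : C) (g : B ⟶ Z), IsSES f g) → (∃ (Z : C) (g : X ⟶ Z), IsSES f' g) →
      ∃ (Z : C) (g : X ⟶ Z), IsSES (f ≫ f') g
  defl_comp : ∀ {A B X : C} (g : A ⟶ B) (g' : B ⟶ X),
      (∃ (Z : C) (f : Z ⟶ A), IsSES f g) → (∃ (Z : C) (f : Z ⟶ B), IsSES f g') →
      ∃ (Z : C) (f : Z ⟶ A), IsSES f (g ≫ g')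
  pushout_infl : ∀ {A B A' : C} (f : A ⟶ B) (a : A ⟶ A'),
      (∃ (Z : C) (g : B ⟶ Z), IsSES f g) →
      ∃ (P : C) (f' : A' ⟶ P) (b : B ⟶ P), IsPushout a f f' b ∧
        ∃ (Z : C) (g : P ⟶ Z), IsSES f' g
  pullback_defl : ∀ {B X X' : C} (g : B ⟶ X) (x : X' ⟶ X),
      (∃ (Z : C) (f : Z ⟶ B), IsSES f g) →
      ∃ (P : C) (g' : P ⟶ X') (b : P ⟶ B), IsPullback g' b x g ∧
        ∃ (Z : C) (f : Z ⟶ P), IsSES f g'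

variable {C}

namespace ExactStructure

variable (E : ExactStructure C)

/-- inflations (admissible monomorphisms) -/
def Infl {A B : C} (f : A ⟶ B) : Prop := ∃ (X : C) (g : B ⟶ X), E.IsSES f g

/-- deflations (admissible epimorphisms) -/
def Defl {B X : C} (g : B ⟶ X) : Prop := ∃ (A : C) (f : A ⟶ B), E.IsSES f g

/-- projective objects relative to the exact structure -/
def Proj (P : C) : Prop :=
  ∀ ⦃B X : C⦄ (g : B ⟶ X), E.Defl g → ∀ h : P ⟶ X, ∃ l : P ⟶ B, l ≫ g = h

/-- injective objects relative to the exact structure -/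
def Inj (I : C) : Prop :=
  ∀ ⦃A B : C⦄ (f : A ⟶ B), E.Infl f → ∀ h : A ⟶ I, ∃ l : B ⟶ I, f ≫ l = h

/-- the exact category has enough projectives -/
def EnoughProj : Prop :=
  ∀ X : C, ∃ (P K : C) (i : K ⟶ P) (p : P ⟶ X), E.Proj P ∧ E.IsSES i p

/-- the exact category has enough injectives -/
def EnoughInj : Prop :=
  ∀ X : C, ∃ (I Z : C) (i : X ⟶ I) (p : I ⟶ Z), E.Inj I ∧ E.IsSES i p

end ExactStructure

/-- a morphism factors through an object of a given class of objects -/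
def FactorsThru (S : Set C) {X Y : C} (f : X ⟶ Y) : Prop :=
  ∃ (W : C) (a : X ⟶ W) (b : W ⟶ Y), W ∈ S ∧ a ≫ b = f

/-- A cotorsion pair `(𝒰, 𝒱)` on the exact category `(C, E)`. -/
structure CotorsionPair (E : ExactStructure C) where
  U : Set C
  V : Set C
  U_summand : ∀ ⦃X Z : C⦄, Z ∈ U → (∃ (i : X ⟶ Z) (r : Z ⟶ X), i ≫ r = 𝟙 X) → X ∈ U
  V_summand : ∀ ⦃X Z : C⦄, Z ∈ V → (∃ (i : X ⟶ Z) (r : Z ⟶ X), i ≫ r = 𝟙 X) → X ∈ V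
  U_add : ∀ ⦃X Y : C⦄, X ∈ U → Y ∈ U → (X ⊞ Y) ∈ U
  V_add : ∀ ⦃X Y : C⦄, X ∈ V → Y ∈ V → (X ⊞ Y) ∈ V
  ext_vanish : ∀ ⦃A B X : C⦄ {f : A ⟶ B} {g : B ⟶ X}, E.IsSES f g → X ∈ U → A ∈ V →
      ∃ r : B ⟶ A, f ≫ r = 𝟙 A
  res : ∀ B : C, ∃ (VB UB : C) (i : VB ⟶ UB) (p : UB ⟶ B),
      VB ∈ V ∧ UB ∈ U ∧ E.IsSES i p
  cores : ∀ B : C, ∃ (VB UB : C) (i : B ⟶ VB) (p : VB ⟶ UB),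
      VB ∈ V ∧ UB ∈ U ∧ E.IsSES i p

namespace CotorsionPair

variable {E : ExactStructure C} (CP : CotorsionPair E)

/-- `𝒲 = 𝒰 ∩ 𝒱` -/
def W : Set C := CP.U ∩ CP.V

/-- `𝓑⁺`: objects admitting a short exact sequence `V ↣ W ↠ B` with `V ∈ 𝒱`, `W ∈ 𝒲`. -/
def Bplus : Set C :=
  {B | ∃ (V₀ W₀ : C) (i : V₀ ⟶ W₀) (p : W₀ ⟶ B), V₀ ∈ CP.V ∧ W₀ ∈ CP.W ∧ E.IsSES i p}

/-- `𝓑⁻`: objects admitting a short exact sequence `B ↣ W ↠ U` with `W ∈ 𝒲`, `U ∈ 𝒰`. -/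
def Bminus : Set C :=
  {B | ∃ (W₀ U₀ : C) (i : B ⟶ W₀) (p : W₀ ⟶ U₀), W₀ ∈ CP.W ∧ U₀ ∈ CP.U ∧ E.IsSES i p}

/-- the heart subcategory `𝓗 = 𝓑⁺ ∩ 𝓑⁻` -/
def Heart : Set C := CP.Bplus ∩ CP.Bminus

/-- the ideal relation defining the additive quotient `𝓑/𝒲` -/
def wRel : HomRel C := fun {X Y} f g =>
  ∃ (W : C) (a : X ⟶ W) (b : W ⟶ Y), W ∈ CP.W ∧ a ≫ b = f - g

/-- the quotient category `𝓑/𝒲` -/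
abbrev QW := CategoryTheory.Quotient CP.wRel

/-- the quotient functor `π : 𝓑 → 𝓑/𝒲` -/
abbrev qf : C ⥤ CP.QW := Quotient.functor _

/-- `𝓑⁺/𝒲` as a full subcategory of `𝓑/𝒲` -/
abbrev BplusCat := ObjectProperty.FullSubcategory (fun X : CP.QW => X.as ∈ CP.Bplus)

/-- `𝓑⁻/𝒲` as a full subcategory of `𝓑/𝒲` -/
abbrev BminusCat := ObjectProperty.FullSubcategory (fun X : CP.QW => X.as ∈ CP.Bminus)

/-- the heart `𝓗/𝒲` as a full subcategory of `𝓑/𝒲` -/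
abbrev HeartCat := ObjectProperty.FullSubcategory (fun X : CP.QW => X.as ∈ CP.Heart)

/-- the inclusion `𝓑⁺/𝒲 ↪ 𝓑/𝒲` -/
abbrev inclPlus : CP.BplusCat ⥤ CP.QW := ObjectProperty.ι _

/-- the inclusion `𝓑⁻/𝒲 ↪ 𝓑/𝒲` -/
abbrev inclMinus : CP.BminusCat ⥤ CP.QW := ObjectProperty.ι _

/-- the inclusion `𝓗/𝒲 ↪ 𝓑/𝒲` -/
abbrev inclHeart : CP.HeartCat ⥤ CP.QW := ObjectProperty.ι _

/-- `add(𝒰 ∗ 𝒱)`: objects `X` admitting a short exact sequence `U ↣ X ⊕ Y ↠ V`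
with `U ∈ 𝒰`, `V ∈ 𝒱`. -/
def addUV : Set C :=
  {X | ∃ (Y U₀ V₀ : C) (i : U₀ ⟶ X ⊞ Y) (p : X ⊞ Y ⟶ V₀),
    U₀ ∈ CP.U ∧ V₀ ∈ CP.V ∧ E.IsSES i p}

end CotorsionPair


variable (E : ExactStructure C)

/-- `𝒲_t = 𝒱₁ ∩ 𝒰₂` for a twin cotorsion pair -/
def Wt (CP₁ CP₂ : CotorsionPair E) : Set C := CP₁.V ∩ CP₂.U

/-- `𝓑_t⁺` for a twin cotorsion pair -/
def Btplus (CP₁ CP₂ : CotorsionPair E) : Set C :=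
  {B | ∃ (V₀ W₀ : C) (i : V₀ ⟶ W₀) (p : W₀ ⟶ B),
    V₀ ∈ CP₂.V ∧ W₀ ∈ Wt E CP₁ CP₂ ∧ E.IsSES i p}

/-- `𝓑_t⁻` for a twin cotorsion pair -/
def Btminus (CP₁ CP₂ : CotorsionPair E) : Set C :=
  {B | ∃ (W₀ U₀ : C) (i : B ⟶ W₀) (p : W₀ ⟶ U₀),
    W₀ ∈ Wt E CP₁ CP₂ ∧ U₀ ∈ CP₁.U ∧ E.IsSES i p}

/-- the heart `𝓗_t` of a twin cotorsion pair -/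
def Ht (CP₁ CP₂ : CotorsionPair E) : Set C := Btplus E CP₁ CP₂ ∩ Btminus E CP₁ CP₂

variable {E}

/-- the ideal relation defining `𝓑/𝒲_t` -/
def wtRel (CP₁ CP₂ : CotorsionPair E) : HomRel C := fun {X Y} f g =>
  FactorsThru (Wt E CP₁ CP₂) (f - g)

/-- the heart `𝓗_t/𝒲_t` of the twin cotorsion pair -/
abbrev HtCat (CP₁ CP₂ : CotorsionPair E) :=
  ObjectProperty.FullSubcategory (fun X : CategoryTheory.Quotient (wtRel CP₁ CP₂) => X.as ∈ Ht E CP₁ CP₂)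

/-- the functor `β₂ : 𝓗_t/𝒲_t → 𝓗₂/𝒲₂` induced by `H₂` -/
def beta2 (CP₁ CP₂ : CotorsionPair E) (H₂ : C ⥤ CP₂.HeartCat)
    (hresp : ∀ (x y : C) (f g : x ⟶ y), wtRel CP₁ CP₂ f g → H₂.map f = H₂.map g) :
    HtCat CP₁ CP₂ ⥤ CP₂.HeartCat :=
  ObjectProperty.ι _ ⋙ CategoryTheory.Quotient.lift (wtRel CP₁ CP₂) H₂ hresp

section ExactCategory

variable {C : Type*} [Category C] [Preadditive C] [HasZeroObject C] {E : ExactStructure C}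

namespace ExactStructure.IsSES

variable {A B X : C} {f : A ⟶ B} {g : B ⟶ X}

lemma mono (h : E.IsSES f g) : Mono f :=
  ⟨fun _ _ huv => Fork.IsLimit.hom_ext (E.isKernel h).some (by simpa using huv)⟩

lemma epi (h : E.IsSES f g) : Epi g :=
  ⟨fun _ _ huv => Cofork.IsColimit.hom_ext (E.isCokernel h).some (by simpa using huv)⟩

lemma exists_lift (h : E.IsSES f g) {T : C} (m : T ⟶ B) (hm : m ≫ g = 0) :
    ∃ l : T ⟶ A, l ≫ f = m :=
  let ⟨l, hl⟩ := KernelFork.IsLimit.lift' (E.isKernel h).some m hm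
  ⟨l, by simpa using hl⟩

lemma exists_desc (h : E.IsSES f g) {T : C} (t : B ⟶ T) (ht : f ≫ t = 0) :
    ∃ l : X ⟶ T, g ≫ l = t :=
  let ⟨l, hl⟩ := CokernelCofork.IsColimit.desc' (E.isCokernel h).some t ht
  ⟨l, by simpa using hl⟩

lemma exists_section_of_retraction (h : E.IsSES f g) {r : B ⟶ A} (hr : f ≫ r = 𝟙 A) :
    ∃ s : X ⟶ B, s ≫ g = 𝟙 X := by
  obtain ⟨s, hs⟩ := h.exists_desc (𝟙 B - r ≫ f) (by simp [Preadditive.comp_sub, reassoc_of% hr])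
  refine ⟨s, ?_⟩
  have := h.epi
  rw [← cancel_epi g, reassoc_of% hs]
  simp [Preadditive.sub_comp, E.comp_zero h]

lemma pullback (h : E.IsSES f g) {X' P : C} {g' : P ⟶ X'} {b : P ⟶ B} {x : X' ⟶ X}
    (sq : IsPullback g' b x g) (hg' : E.Defl g') : ∃ f' : A ⟶ P, E.IsSES f' g' ∧ f' ≫ b = f := by
  obtain ⟨Z, f₀, hf₀⟩ := hg'
  have := h.mono
  have := hf₀.mono
  let k : A ⟶ P := sq.lift 0 f (by rw [zero_comp, E.comp_zero h])
  obtain ⟨w, hw⟩ := h.exists_lift (f₀ ≫ b)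
    (by rw [Category.assoc, ← sq.w, reassoc_of% (E.comp_zero hf₀), zero_comp])
  obtain ⟨w', hw'⟩ := hf₀.exists_lift k (sq.lift_fst _ _ _)
  have hw'b : w' ≫ f₀ ≫ b = f := by rw [reassoc_of% hw', sq.lift_snd]
  let e : A ≅ Z :=
    { hom := w'
      inv := w
      hom_inv_id := by rw [← cancel_mono f, Category.assoc, hw, hw'b, Category.id_comp]
      inv_hom_id := by
        rw [← cancel_mono f₀, Category.id_comp]
        apply sq.hom_ext
        · simp [E.comp_zero hf₀]
        · rw [Category.assoc, Category.assoc, hw'b, hw] }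
  exact ⟨w' ≫ f₀, by simpa using E.ses_iso_congr e (Iso.refl P) (Iso.refl X') hf₀,
    by rw [Category.assoc, hw'b]⟩

lemma pushout (h : E.IsSES f g) {A' P : C} {f' : A' ⟶ P} {b : B ⟶ P} {a : A ⟶ A'}
    (sq : IsPushout a f f' b) (hf' : E.Infl f') : ∃ g' : P ⟶ X, E.IsSES f' g' ∧ b ≫ g' = g := by
  obtain ⟨Z, g₀, hg₀⟩ := hf'
  have := h.epi
  have := hg₀.epi
  let k : P ⟶ X := sq.desc 0 g (by rw [Limits.comp_zero, E.comp_zero h])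
  obtain ⟨w, hw⟩ := h.exists_desc (b ≫ g₀)
    (by rw [← Category.assoc, ← sq.w, Category.assoc, E.comp_zero hg₀, Limits.comp_zero])
  obtain ⟨w', hw'⟩ := hg₀.exists_desc k (sq.inl_desc _ _ _)
  have hbw' : b ≫ g₀ ≫ w' = g := by rw [hw', sq.inr_desc]
  let e : Z ≅ X :=
    { hom := w'
      inv := w
      hom_inv_id := by
        rw [← cancel_epi g₀, Category.comp_id]
        apply sq.hom_ext
        · simp [E.comp_zero hg₀, reassoc_of% (E.comp_zero hg₀)]
        · rw [reassoc_of% hbw', hw]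
      inv_hom_id := by rw [← cancel_epi g, reassoc_of% hw, hbw', Category.comp_id] }
  exact ⟨g₀ ≫ w', by simpa using E.ses_iso_congr (Iso.refl A') (Iso.refl P) e hg₀, hbw'⟩

lemma pullback_infl {A X B E' P : C} {i : A ⟶ X} {p : X ⟶ B} (h : E.IsSES i p)
    {d : E' ⟶ X} (hd : E.Defl d) {d' : P ⟶ A} {b : P ⟶ E'} (sq : IsPullback d' b i d) :
    E.IsSES b (d ≫ p) := by
  obtain ⟨K, k, hk⟩ := E.defl_comp d p hd ⟨_, _, h⟩
  have := h.mono
  have := hk.mono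
  obtain ⟨t, ht⟩ := h.exists_lift (k ≫ d) (by rw [Category.assoc, E.comp_zero hk])
  obtain ⟨l, hl⟩ := hk.exists_lift b
    (by rw [← Category.assoc, ← sq.w, Category.assoc, E.comp_zero h, Limits.comp_zero])
  let e : P ≅ K :=
    { hom := l
      inv := sq.lift t k ht
      hom_inv_id := by
        apply sq.hom_ext
        · rw [Category.assoc, sq.lift_fst, Category.id_comp, ← cancel_mono i, Category.assoc,
            ht, reassoc_of% hl, sq.w]
        · rw [Category.assoc, sq.lift_snd, hl, Category.id_comp]
      inv_hom_id := by rw [← cancel_mono k, Category.assoc, hl, sq.lift_snd, Category.id_comp] }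
  simpa [e, hl] using E.ses_iso_congr e (Iso.refl E') (Iso.refl B) hk

end ExactStructure.IsSES

/-- Noether's isomorphism `(C'/A)/(B/A) ≅ C'/B`. -/
lemma ExactStructure.exists_ses_cokernel_comp {A B C' X Z : C} {i : A ⟶ B} {q : B ⟶ X}
    (h₁ : E.IsSES i q) {c : B ⟶ C'} {e : C' ⟶ Z} (h₂ : E.IsSES c e) :
    ∃ (Y : C) (π : C' ⟶ Y) (j : X ⟶ Y) (e' : Y ⟶ Z),
      E.IsSES (i ≫ c) π ∧ E.IsSES j e' ∧ q ≫ j = c ≫ π ∧ π ≫ e' = e := by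
  obtain ⟨Y, π, h₃⟩ := E.infl_comp i c ⟨_, _, h₁⟩ ⟨_, _, h₂⟩
  obtain ⟨P, f', b, sq, hf'⟩ := E.pushout_infl c q ⟨_, _, h₂⟩
  obtain ⟨g', hP, hbg'⟩ := h₂.pushout sq hf'
  have := h₁.epi
  have := h₃.epi
  obtain ⟨j, hj⟩ := h₁.exists_desc (c ≫ π) (by rw [← Category.assoc, E.comp_zero h₃])
  obtain ⟨φ, hφ⟩ := h₃.exists_desc b
    (by rw [Category.assoc, ← sq.w, reassoc_of% (E.comp_zero h₁), zero_comp])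
  let iso : P ≅ Y :=
    { hom := sq.desc j π hj
      inv := φ
      hom_inv_id := by
        apply sq.hom_ext
        · rw [← cancel_epi q, sq.inl_desc_assoc, reassoc_of% hj, hφ, Category.comp_id, sq.w]
        · rw [sq.inr_desc_assoc, hφ, Category.comp_id]
      inv_hom_id := by rw [← cancel_epi π, reassoc_of% hφ, sq.inr_desc, Category.comp_id] }
  refine ⟨Y, π, j, φ ≫ g', h₃, ?_, hj, by rw [reassoc_of% hφ, hbg']⟩
  simpa [iso] using E.ses_iso_congr (Iso.refl X) iso (Iso.refl Z) hP

end ExactCategory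

namespace CotorsionPair

variable (CP : CotorsionPair E)

lemma zero_mem_U : (0 : C) ∈ CP.U :=
  let ⟨_, _, _, _, _, hU, _⟩ := CP.res 0
  CP.U_summand hU ⟨0, 0, (isZero_zero C).eq_of_src _ _⟩

lemma zero_mem_V : (0 : C) ∈ CP.V :=
  let ⟨_, _, _, _, hV, _, _⟩ := CP.cores 0
  CP.V_summand hV ⟨0, 0, (isZero_zero C).eq_of_src _ _⟩

lemma zero_mem_W : (0 : C) ∈ CP.W := ⟨CP.zero_mem_U, CP.zero_mem_V⟩

lemma zero_mem_Bplus : (0 : C) ∈ CP.Bplus :=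
  ⟨0, 0, 𝟙 0, 0, CP.zero_mem_V, CP.zero_mem_W, E.id_ses 0⟩

lemma zero_mem_Bminus : (0 : C) ∈ CP.Bminus :=
  ⟨0, 0, 0, 𝟙 0, CP.zero_mem_W, CP.zero_mem_U, E.id_ses' 0⟩

instance : Congruence CP.wRel where
  equivalence :=
    { refl := fun _ => ⟨0, 0, 0, CP.zero_mem_W, by simp⟩
      symm := fun ⟨W, a, b, hW, hab⟩ => ⟨W, -a, b, hW, by rw [Preadditive.neg_comp, hab, neg_sub]⟩
      trans := fun ⟨W₁, a₁, b₁, hW₁, h₁⟩ ⟨W₂, a₂, b₂, hW₂, h₂⟩ =>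
        ⟨W₁ ⊞ W₂, biprod.lift a₁ a₂, biprod.desc b₁ b₂,
          ⟨CP.U_add hW₁.1 hW₂.1, CP.V_add hW₁.2 hW₂.2⟩, by rw [biprod.lift_desc, h₁, h₂]; abel⟩ }
  comp_left := fun h _ _ ⟨W, a, b, hW, hab⟩ =>
    ⟨W, h ≫ a, b, hW, by rw [Category.assoc, hab, Preadditive.comp_sub]⟩
  comp_right := fun h ⟨W, a, b, hW, hab⟩ =>
    ⟨W, a, b ≫ h, hW, by rw [← Category.assoc, hab, Preadditive.sub_comp]⟩

lemma exists_lift {V E' Y X : C} {v : V ⟶ E'} {d : E' ⟶ Y} (h : E.IsSES v d) (hV : V ∈ CP.V)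
    (hX : X ∈ CP.U) (t : X ⟶ Y) : ∃ l : X ⟶ E', l ≫ d = t := by
  obtain ⟨P, d', b, sq, hd'⟩ := E.pullback_defl d t ⟨_, _, h⟩
  obtain ⟨v', hv', -⟩ := h.pullback sq hd'
  obtain ⟨r, hr⟩ := CP.ext_vanish hv' hX hV
  obtain ⟨s, hs⟩ := hv'.exists_section_of_retraction hr
  exact ⟨s ≫ b, by rw [Category.assoc, ← sq.w, reassoc_of% hs]⟩

lemma exists_extend {A B X V : C} {i : A ⟶ B} {p : B ⟶ X} (h : E.IsSES i p) (hX : X ∈ CP.U)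
    (hV : V ∈ CP.V) (a : A ⟶ V) : ∃ r : B ⟶ V, i ≫ r = a := by
  obtain ⟨Q, f', b, sq, hf'⟩ := E.pushout_infl i a ⟨_, _, h⟩
  obtain ⟨p', hp', -⟩ := h.pushout sq hf'
  obtain ⟨ρ, hρ⟩ := CP.ext_vanish hp' hX hV
  exact ⟨b ≫ ρ, by rw [← Category.assoc, ← sq.w, Category.assoc, hρ, Category.comp_id]⟩

/-- The pullback of a resolution of `X` to `A` splits, and its retraction extends over the
resolution because `B ∈ 𝒰`; so the resolution of `X` splits and `X` is a summand of an object
of `𝒰`. -/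
lemma mem_U_of_ses {A X B : C} {i : A ⟶ X} {p : X ⟶ B} (h : E.IsSES i p) (hA : A ∈ CP.U)
    (hB : B ∈ CP.U) : X ∈ CP.U := by
  obtain ⟨VX, UX, v, d, hVX, hUX, hres⟩ := CP.res X
  obtain ⟨P, d', b, sq, hd'⟩ := E.pullback_defl d i ⟨_, _, hres⟩
  obtain ⟨v', hv', hv'b⟩ := hres.pullback sq hd'
  obtain ⟨ρ, hρ⟩ := CP.ext_vanish hv' hA hVX
  obtain ⟨r, hr⟩ := CP.exists_extend (h.pullback_infl ⟨_, _, hres⟩ sq) hB hVX ρ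
  obtain ⟨s, hs⟩ := hres.exists_section_of_retraction (r := r)
    (by rw [← hv'b, Category.assoc, hr, hρ])
  exact CP.U_summand hUX ⟨s, d, hs⟩

end CotorsionPair

section TwinCotorsionPair

variable {CP₁ CP₂ : CotorsionPair E}

lemma mem_Bminus_of_mem_Btminus (htwin : CP₁.U ⊆ CP₂.U) {A : C}
    (hA : A ∈ Btminus E CP₁ CP₂) : A ∈ CP₂.Bminus := by
  obtain ⟨W₀, U₀, i, q, hW₀, hU₀, hiq⟩ := hA
  obtain ⟨V, U, c, e, hV, hU, hce⟩ := CP₂.cores W₀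
  obtain ⟨Y, π, j, e', hπ, hje', -, -⟩ := E.exists_ses_cokernel_comp hiq hce
  exact ⟨V, Y, i ≫ c, π, ⟨CP₂.mem_U_of_ses hce hW₀.2 hU, hV⟩,
    CP₂.mem_U_of_ses hje' (htwin hU₀) hU, hπ⟩

/-- For `B ∈ 𝓑_t⁺` presented as `V ↣ W₀ ↠ B`, take a coresolution `W₀ ↣ V' ↠ U` for
`(𝒰₂, 𝒱₂)`; then `Y = V'/V` and `j : B ↣ Y` is the induced inflation. -/
lemma exists_hom_to_Bplus_reflecting_factorsThru {B : C} (hB : B ∈ Btplus E CP₁ CP₂) :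
    ∃ (Y : C) (j : B ⟶ Y), Y ∈ CP₂.Bplus ∧
      ∀ ⦃A : C⦄ (h : A ⟶ B), FactorsThru CP₂.W (h ≫ j) → FactorsThru (Wt E CP₁ CP₂) h := by
  obtain ⟨V, W₀, v, p, hV, hW₀, hvp⟩ := hB
  obtain ⟨V', U, c, e, hV', hU, hce⟩ := CP₂.cores W₀
  obtain ⟨Y, π, j, e', hπ, hje', hpj, hπe'⟩ := E.exists_ses_cokernel_comp hvp hce
  refine ⟨Y, j, ⟨V, V', v ≫ c, π, hV, ⟨CP₂.mem_U_of_ses hce hW₀.2 hU, hV'⟩, hπ⟩, ?_⟩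
  rintro A h ⟨W, α, β, hW, hαβ⟩
  obtain ⟨β', hβ'⟩ := CP₂.exists_lift hπ hV hW.1 β
  obtain ⟨u, hu⟩ := hce.exists_lift (α ≫ β') (by
    rw [← hπe', Category.assoc, reassoc_of% hβ', reassoc_of% hαβ, E.comp_zero hje',
      Limits.comp_zero])
  refine ⟨W₀, u, p, hW₀, ?_⟩
  have := hje'.mono
  rw [← cancel_mono j, Category.assoc, hpj, reassoc_of% hu, hβ', hαβ]

end TwinCotorsionPair

/-- The unit of `σp ⊣ iP` at `iM.obj a` factors through the counit of `iM ⊣ σm`, so `φ ≫ η_b`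
is determined by the image of `φ` under `σp ⋙ iP ⋙ σm ⋙ iM`; and every map into `iP.obj y`
factors through `η_b`. -/
lemma Adjunction.comp_eq_comp_of_map_eq {D P M : Type*} [Category D] [Category P] [Category M]
    {iP : P ⥤ D} {σp : D ⥤ P} (adjP : σp ⊣ iP) {iM : M ⥤ D} {σm : D ⥤ M} (adjM : iM ⊣ σm)
    {a : M} {b : D} {φ ψ : iM.obj a ⟶ b}
    (h : (σp ⋙ iP ⋙ σm ⋙ iM).map φ = (σp ⋙ iP ⋙ σm ⋙ iM).map ψ) {y : P}
    (j : b ⟶ iP.obj y) : φ ≫ j = ψ ≫ j := by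
  have hη : ∀ χ : iM.obj a ⟶ b, χ ≫ adjP.unit.app b =
      iM.map (adjM.homEquiv _ _ (adjP.unit.app _)) ≫ (σp ⋙ iP ⋙ σm ⋙ iM).map χ ≫
        adjM.counit.app _ := by
    intro χ
    simp [Adjunction.homEquiv_unit]
  have hj : adjP.unit.app b ≫ iP.map ((adjP.homEquiv _ _).symm j) = j :=
    (adjP.homEquiv_unit _ _ _).symm.trans (Equiv.apply_symm_apply _ _)
  calc φ ≫ j = (φ ≫ adjP.unit.app b) ≫ iP.map ((adjP.homEquiv _ _).symm j) := by
        rw [Category.assoc, hj]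
    _ = (ψ ≫ adjP.unit.app b) ≫ iP.map ((adjP.homEquiv _ _).symm j) := by rw [hη, hη, h]
    _ = ψ ≫ j := by rw [Category.assoc, hj]

namespace CotorsionPair

variable {CP : CotorsionPair E} {σp : CP.QW ⥤ CP.BplusCat} {σm : CP.QW ⥤ CP.BminusCat}
  {H : C ⥤ CP.HeartCat}

lemma qf_map_comp_eq_of_map_eq (adjP : σp ⊣ CP.inclPlus) (adjM : CP.inclMinus ⊣ σm)
    (hH : H ⋙ CP.inclHeart = CP.qf ⋙ σp ⋙ CP.inclPlus ⋙ σm ⋙ CP.inclMinus)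
    {A B Y : C} (hA : A ∈ CP.Bminus) (hY : Y ∈ CP.Bplus) {f g : A ⟶ B}
    (hfg : H.map f = H.map g) (j : B ⟶ Y) : CP.qf.map (f ≫ j) = CP.qf.map (g ≫ j) := by
  have hR : (CP.qf ⋙ σp ⋙ CP.inclPlus ⋙ σm ⋙ CP.inclMinus).map f =
      (CP.qf ⋙ σp ⋙ CP.inclPlus ⋙ σm ⋙ CP.inclMinus).map g := by
    have hf := Functor.congr_hom hH f
    have hg := Functor.congr_hom hH g
    rw [Functor.comp_map, hfg, ← Functor.comp_map, hg] at hf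
    rwa [cancel_epi, cancel_mono, eq_comm] at hf
  rw [Functor.map_comp, Functor.map_comp]
  exact Adjunction.comp_eq_comp_of_map_eq adjP adjM (a := ⟨_, hA⟩) hR (y := ⟨_, hY⟩) _

lemma map_zero_of_comp_inclHeart_eq [HasZeroMorphisms CP.HeartCat]
    (adjP : σp ⊣ CP.inclPlus) (adjM : CP.inclMinus ⊣ σm)
    (hH : H ⋙ CP.inclHeart = CP.qf ⋙ σp ⋙ CP.inclPlus ⋙ σm ⋙ CP.inclMinus) (A B : C) :
    H.map (0 : A ⟶ B) = 0 := by
  have : Subsingleton (CP.qf.obj 0 ⟶ CP.qf.obj 0) := ⟨fun u v => by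
    obtain ⟨u, rfl⟩ := CP.qf.map_surjective u
    obtain ⟨v, rfl⟩ := CP.qf.map_surjective v
    rw [(isZero_zero C).eq_of_src u v]⟩
  -- `0 ∈ 𝓑⁺ ∩ 𝓑⁻`, where the reflection and the coreflection are isomorphisms.
  let e : CP.inclHeart.obj (H.obj 0) ≅ CP.qf.obj 0 :=
    eqToIso (Functor.congr_obj hH 0) ≪≫
      CP.inclMinus.mapIso (σm.mapIso (CP.inclPlus.mapIso
        (asIso (adjP.counit.app ⟨_, CP.zero_mem_Bplus⟩)))) ≪≫
      (CP.inclMinus.mapIso (asIso (adjM.unit.app ⟨_, CP.zero_mem_Bminus⟩))).symm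
  have : Subsingleton (H.obj 0 ⟶ H.obj 0) :=
    have := (e.homCongr e).subsingleton
    CP.inclHeart.map_injective.subsingleton
  have hZ : IsZero (H.obj 0) := (IsZero.iff_id_eq_zero _).2 (Subsingleton.elim _ _)
  rw [← zero_comp (X := A) (Y := 0) (f := (0 : (0 : C) ⟶ B)), H.map_comp,
    hZ.eq_of_src (H.map _) 0, comp_zero]

end CotorsionPair

lemma factorsThru_Wt_sub_of_map_eq {CP₁ CP₂ : CotorsionPair E} (htwin : CP₁.U ⊆ CP₂.U)
    {σp : CP₂.QW ⥤ CP₂.BplusCat} (adjP : σp ⊣ CP₂.inclPlus)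
    {σm : CP₂.QW ⥤ CP₂.BminusCat} (adjM : CP₂.inclMinus ⊣ σm) {H : C ⥤ CP₂.HeartCat}
    (hH : H ⋙ CP₂.inclHeart = CP₂.qf ⋙ σp ⋙ CP₂.inclPlus ⋙ σm ⋙ CP₂.inclMinus)
    {A B : C} (hA : A ∈ Btminus E CP₁ CP₂) (hB : B ∈ Btplus E CP₁ CP₂) {f g : A ⟶ B}
    (hfg : H.map f = H.map g) : FactorsThru (Wt E CP₁ CP₂) (f - g) := by
  obtain ⟨Y, j, hY, hj⟩ := exists_hom_to_Bplus_reflecting_factorsThru hB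
  apply hj
  obtain ⟨W, a, b, hW, hab⟩ := (Quotient.functor_map_eq_iff _ _ _).mp
    (CotorsionPair.qf_map_comp_eq_of_map_eq adjP adjM hH
      (mem_Bminus_of_mem_Btminus htwin hA) hY hfg j)
  exact ⟨W, a, b, hW, by rw [hab, Preadditive.sub_comp]⟩

theorem stmt18_general (CP₁ CP₂ : CotorsionPair E) (htwin : CP₁.U ⊆ CP₂.U)
    (σp₂ : CP₂.QW ⥤ CP₂.BplusCat) (adj₃ : σp₂ ⊣ CP₂.inclPlus)
    (σm₂ : CP₂.QW ⥤ CP₂.BminusCat) (adj₄ : CP₂.inclMinus ⊣ σm₂)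
    (H₂ : C ⥤ CP₂.HeartCat)
    (hH₂ : H₂ ⋙ CP₂.inclHeart =
      CP₂.qf ⋙ σp₂ ⋙ CP₂.inclPlus ⋙ σm₂ ⋙ CP₂.inclMinus)
    [Abelian CP₂.HeartCat]
    (hresp : ∀ (x y : C) (f g : x ⟶ y), wtRel CP₁ CP₂ f g → H₂.map f = H₂.map g) :
    (∀ (A B : C), A ∈ Ht E CP₁ CP₂ → B ∈ Ht E CP₁ CP₂ → ∀ f : A ⟶ B,
      (H₂.map f = 0 ↔ FactorsThru (Wt E CP₁ CP₂) f)) ∧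
    (beta2 CP₁ CP₂ H₂ hresp).Faithful := by
  have hzero := CotorsionPair.map_zero_of_comp_inclHeart_eq adj₃ adj₄ hH₂
  refine ⟨fun A B hA hB f => ⟨fun hf => ?_, fun hf => ?_⟩, ⟨fun {X Y} φ ψ hφψ => ?_⟩⟩
  · simpa using factorsThru_Wt_sub_of_map_eq htwin adj₃ adj₄ hH₂ hA.2 hB.1 (g := 0)
      (hf.trans (hzero A B).symm)
  · rw [hresp _ _ f 0 (by simpa [wtRel] using hf), hzero]
  · obtain ⟨f, hf⟩ := (Quotient.functor (wtRel CP₁ CP₂)).map_surjective φ.hom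
    obtain ⟨g, hg⟩ := (Quotient.functor (wtRel CP₁ CP₂)).map_surjective ψ.hom
    have hfg : H₂.map f = H₂.map g := by
      simpa [beta2, ← hf, ← hg, Quotient.lift_map_functor_map] using hφψ
    apply ObjectProperty.hom_ext
    rw [← hf, ← hg]
    exact CategoryTheory.Quotient.sound _
      (factorsThru_Wt_sub_of_map_eq htwin adj₃ adj₄ hH₂ X.property.2 Y.property.1 hfg)

/-- for a twin cotorsion pair and `f : A ⟶ B` with `A, B ∈ 𝓗_t`,
`H₂(f) = 0` iff `f` factors through `𝒲_t`; consequently `β₂` is faithful. -/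
theorem stmt18 (CP₁ CP₂ : CotorsionPair E) (htwin : CP₁.U ⊆ CP₂.U)
    (hEP : E.EnoughProj) (hEI : E.EnoughInj)
    (σp₂ : CP₂.QW ⥤ CP₂.BplusCat) (adj₃ : σp₂ ⊣ CP₂.inclPlus)
    (σm₂ : CP₂.QW ⥤ CP₂.BminusCat) (adj₄ : CP₂.inclMinus ⊣ σm₂)
    (H₂ : C ⥤ CP₂.HeartCat)
    (hH₂ : H₂ ⋙ CP₂.inclHeart =
      CP₂.qf ⋙ σp₂ ⋙ CP₂.inclPlus ⋙ σm₂ ⋙ CP₂.inclMinus)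
    [Abelian CP₂.HeartCat]
    (hresp : ∀ (x y : C) (f g : x ⟶ y), wtRel CP₁ CP₂ f g → H₂.map f = H₂.map g) :
    (∀ (A B : C), A ∈ Ht E CP₁ CP₂ → B ∈ Ht E CP₁ CP₂ → ∀ f : A ⟶ B,
      (H₂.map f = 0 ↔ FactorsThru (Wt E CP₁ CP₂) f)) ∧
    (beta2 CP₁ CP₂ H₂ hresp).Faithful :=
  stmt18_general CP₁ CP₂ htwin σp₂ adj₃ σm₂ adj₄ H₂ hH₂ hresp
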